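/- arXiv:1909.10794 — 3 statements merged into one kernel-verified Lean document; each statement's English description precedes it below -/
import Mathlib

section
/- Let X and Y be finite-dimensional real vector spaces and A, B : X → Y linear maps such that B(ker A) ∩ im A = {0}. Then for all but finitely many t ∈ ℝ, the kernel of A + t·B equals ker A ∩ ker B. -/
open LinearMap Submodule Module Polynomial

theorem stmt_0 {X Y : Type*} [AddCommGroup X] [Module ℝ X] [FiniteDimensional ℝ X]
    [AddCommGroup Y] [Module ℝ Y] [FiniteDimensional ℝ Y]
    (A B : X →ₗ[ℝ] Y)
    (h : Submodule.map B (LinearMap.ker A) ⊓ LinearMap.range A = ⊥) :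
    {t : ℝ | LinearMap.ker (A + t • B) ≠ LinearMap.ker A ⊓ LinearMap.ker B}.Finite := by
  classical
  set K := LinearMap.ker A ⊓ LinearMap.ker B with hK
  set Z := (LinearMap.range A).comap B with hZdef
  -- ker A ⊓ Z = K
  have hKZ : LinearMap.ker A ⊓ Z = K := by
    ext x
    simp only [Submodule.mem_inf, LinearMap.mem_ker, hZdef, Submodule.mem_comap,
      LinearMap.mem_range, hK]
    constructor
    · rintro ⟨hxA, hxB⟩
      refine ⟨hxA, ?_⟩
      have hx : B x ∈ Submodule.map B (LinearMap.ker A) ⊓ LinearMap.range A :=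
        ⟨⟨x, hxA, rfl⟩, hxB⟩
      rw [h] at hx
      exact hx
    · rintro ⟨hxA, hxB⟩
      exact ⟨hxA, ⟨0, by simp [hxB]⟩⟩
  -- the restricted family
  set L : ℝ → (Z →ₗ[ℝ] Y) := fun t => (A + t • B).domRestrict Z with hLdef
  have hL0 : L 0 = A.domRestrict Z := by
    ext z; simp [hLdef]
  have hkerL0 : Module.finrank ℝ (LinearMap.ker (L 0)) = Module.finrank ℝ K := by
    rw [hL0, LinearMap.ker_domRestrict]
    have h1 : Submodule.comap Z.subtype (LinearMap.ker A)
        = Submodule.comap Z.subtype K := by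
      rw [← hKZ, Submodule.comap_inf, Submodule.comap_subtype_self, inf_top_eq]
    rw [h1]
    have hKle : K ≤ Z := hKZ ▸ inf_le_right
    exact (Submodule.comapSubtypeEquivOfLe hKle).finrank_eq
  set r := Module.finrank ℝ (LinearMap.range (L 0)) with hr
  -- basis of range (L 0)
  let w : Basis (Fin r) ℝ (LinearMap.range (L 0)) := Module.finBasis ℝ _
  -- preimages
  have hz : ∀ i : Fin r, ∃ z : Z, L 0 z = (w i : Y) := fun i => (w i).2
  choose z hzw using hz
  set a : Fin r → Y := fun i => A (z i : X) with ha
  set b : Fin r → Y := fun i => B (z i : X) with hb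
  have haw : ∀ i, a i = (w i : Y) := by
    intro i
    rw [← hzw i, hL0]
    rfl
  -- independence of a
  have hind : LinearIndependent ℝ a := by
    have := w.linearIndependent.map' (LinearMap.range (L 0)).subtype
      (Submodule.ker_subtype _)
    convert this using 1
    funext i; rw [haw i]; rfl
    rfl
  -- left inverse
  let f : (Fin r → ℝ) →ₗ[ℝ] Y := (Pi.basisFun ℝ (Fin r)).constr ℝ a
  have hfinj : LinearMap.ker f = ⊥ := by
    rw [LinearMap.ker_eq_bot]
    intro c d hcd
    have hc : ∀ c : Fin r → ℝ, f c = ∑ i, c i • a i := by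
      intro c
      simp [f, Basis.constr_apply_fintype, Pi.basisFun_equivFun]
    have h0 : ∑ i, (c - d) i • a i = 0 := by
      simp only [Pi.sub_apply, sub_smul, Finset.sum_sub_distrib, ← hc, hcd, sub_self]
    have := Fintype.linearIndependent_iff.1 hind _ h0
    funext i
    have := this i
    simpa [sub_eq_zero] using this
  obtain ⟨Φ, hΦ⟩ := f.exists_leftInverse_of_injective hfinj
  have hfa : ∀ i, f (Pi.single i 1) = a i := by
    intro i
    simp [f, Basis.constr_apply_fintype, Pi.basisFun_equivFun, Pi.single_apply]
  have hΦa : ∀ i, Φ (a i) = Pi.single i 1 := by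
    intro i
    rw [← hfa i]
    have := LinearMap.congr_fun hΦ (Pi.single i 1)
    simpa using this
  -- the polynomial
  set Mp : Matrix (Fin r) (Fin r) (Polynomial ℝ) :=
    Matrix.of fun j i => Polynomial.C (Φ (a i) j) + Polynomial.X * Polynomial.C (Φ (b i) j)
    with hMp
  set p := Mp.det with hp
  have hpeval : ∀ t : ℝ, p.eval t
      = (Matrix.of fun j i => Φ (a i) j + t * Φ (b i) j).det := by
    intro t
    rw [hp, ← Polynomial.coe_evalRingHom, RingHom.map_det]
    congr 1
    ext j i
    simp only [hMp, RingHom.mapMatrix_apply, Matrix.map_apply, Matrix.of_apply, Polynomial.coe_evalRingHom, Polynomial.eval_ofNat,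
      Polynomial.eval_add, Polynomial.eval_mul, Polynomial.eval_C, Polynomial.eval_X]
  have hp0 : p.eval 0 = 1 := by
    rw [hpeval 0]
    have : (Matrix.of fun j i => Φ (a i) j + (0:ℝ) * Φ (b i) j)
        = (1 : Matrix (Fin r) (Fin r) ℝ) := by
      ext j i
      rw [Matrix.of_apply, hΦa i, Matrix.one_apply]
      rcases eq_or_ne j i with rfl | hne
      · simp
      · simp [Pi.single_apply, Ne.symm hne, hne]
    rw [this, Matrix.det_one]
  have hpne : p ≠ 0 := fun hc => by simp [hc] at hp0
  -- main step
  refine Set.Finite.subset (((p.finite_setOf_isRoot hpne).union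
    (Set.finite_singleton 0))) ?_
  intro t ht
  simp only [Set.mem_setOf_eq] at ht
  by_contra hmem
  simp only [Set.mem_union, Set.mem_setOf_eq, Set.mem_singleton_iff, Polynomial.IsRoot,
    not_or] at hmem
  obtain ⟨hproot, ht0⟩ := hmem
  apply ht
  -- t ≠ 0, p.eval t ≠ 0 : prove ker (A + t•B) = K
  have hkerZ : LinearMap.ker (A + t • B) ≤ Z := by
    intro x hx
    simp only [LinearMap.mem_ker, LinearMap.add_apply, LinearMap.smul_apply] at hx
    have hBx : B x = A ((-t⁻¹) • x) := by
      rw [map_smul]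
      have h2 : t • B x = -A x := by
        rw [eq_neg_iff_add_eq_zero, add_comm]; exact hx
      rw [neg_smul, ← smul_neg, ← h2, smul_smul, inv_mul_cancel₀ ht0, one_smul]
    exact Submodule.mem_comap.2 ⟨_, hBx.symm⟩
  -- independence of (A + t•B) (z i)
  set G : Matrix (Fin r) (Fin r) ℝ := Matrix.of fun j i => Φ (a i) j + t * Φ (b i) j with hG
  have hGdet : G.det ≠ 0 := by rw [hG, ← hpeval]; exact hproot
  set y : Fin r → Y := fun i => (A + t • B) (z i : X) with hy
  have hyab : ∀ i, y i = a i + t • b i := by intro i; simp [hy, ha, hb]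
  have hindy : LinearIndependent ℝ y := by
    rw [Fintype.linearIndependent_iff]
    intro c hc
    have h1 : ∑ i, c i • Φ (y i) = 0 := by
      rw [← map_zero Φ, ← hc, map_sum]
      simp only [map_smul]
    have hΦc : ∀ j, G.mulVec c j = 0 := by
      intro j
      have h2 := congrFun h1 j
      simp only [Finset.sum_apply, Pi.smul_apply, Pi.zero_apply, smul_eq_mul] at h2
      rw [Matrix.mulVec, dotProduct, ← h2]
      apply Finset.sum_congr rfl
      intro i _
      simp only [hG, Matrix.of_apply, hyab i, map_add, map_smul, Pi.add_apply,
        Pi.smul_apply, smul_eq_mul]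
      ring
    have hc0 : c = 0 := Matrix.eq_zero_of_mulVec_eq_zero hGdet (funext hΦc)
    intro i; rw [hc0]; rfl
  -- rank bound
  have hymem : ∀ i, y i ∈ LinearMap.range (L t) := by
    intro i
    exact ⟨z i, rfl⟩
  have hrle : r ≤ Module.finrank ℝ (LinearMap.range (L t)) := by
    have hind' : LinearIndependent ℝ (fun i => (⟨y i, hymem i⟩ :
        LinearMap.range (L t))) := by
      apply LinearIndependent.of_comp (LinearMap.range (L t)).subtype
      convert hindy
      rfl
    simpa using hind'.fintype_card_le_finrank
  have hrank0 : Module.finrank ℝ (LinearMap.range (L 0)) + Module.finrank ℝ (LinearMap.ker (L 0))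
      = Module.finrank ℝ Z := (L 0).finrank_range_add_finrank_ker
  have hrankt : Module.finrank ℝ (LinearMap.range (L t)) + Module.finrank ℝ (LinearMap.ker (L t))
      = Module.finrank ℝ Z := (L t).finrank_range_add_finrank_ker
  have hkerlt : Module.finrank ℝ (LinearMap.ker (L t)) ≤ Module.finrank ℝ K := by
    rw [← hkerL0]
    omega
  -- transfer to ker (A + t•B)
  have hkereq : Module.finrank ℝ (LinearMap.ker (A + t • B))
      = Module.finrank ℝ (LinearMap.ker (L t)) := by
    rw [hLdef]
    simp only
    rw [LinearMap.ker_domRestrict]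
    have h1 : Submodule.comap Z.subtype (LinearMap.ker (A + t • B))
        ≃ₗ[ℝ] LinearMap.ker (A + t • B) := Submodule.comapSubtypeEquivOfLe hkerZ
    exact h1.finrank_eq.symm
  have hKle : K ≤ LinearMap.ker (A + t • B) := by
    intro x hx
    rw [hK, Submodule.mem_inf] at hx
    simp only [LinearMap.mem_ker] at hx ⊢
    simp [hx.1, hx.2]
  exact (Submodule.eq_of_le_of_finrank_le hKle
    (le_trans (le_of_eq hkereq) hkerlt)).symm
end

section
/- With Δ = K₄ realized at four points in general position in the plane z = 0 in ℝ³ as above, the degree-2 part of the Artinian reduction satisfies dim A²(Δ) = 3. -/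
open MvPolynomial

/-! ### Finsupp degree lemmas -/

lemma deg_add (a b : Fin 4 →₀ ℕ) : (a + b).degree = a.degree + b.degree := by
  simp [Finsupp.degree_eq_weight_one, map_add]

lemma deg_single (i : Fin 4) (n : ℕ) : (Finsupp.single i n).degree = n := by
  rcases eq_or_ne n 0 with h | h
  · simp [Finsupp.degree, h]
  · simp [Finsupp.degree_apply, Finsupp.support_single_ne_zero i h]

lemma deg_univ (d : Fin 4 →₀ ℕ) : d.degree = ∑ i : Fin 4, d i := by
  rw [Finsupp.degree]
  exact Finset.sum_subset (Finset.subset_univ _)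
    (fun x _ hx => Finsupp.notMem_support_iff.mp hx)

lemma deg_one_single (d : Fin 4 →₀ ℕ) (h : d.degree = 1) : ∃ i, d = Finsupp.single i 1 := by
  have hs : d 0 + d 1 + d 2 + d 3 = 1 := by
    have := deg_univ d; rw [h, Fin.sum_univ_four] at this; omega
  by_cases h0 : d 0 = 1
  · exact ⟨0, by ext j; fin_cases j <;> simp [Finsupp.single_apply] <;> omega⟩
  by_cases h1 : d 1 = 1
  · exact ⟨1, by ext j; fin_cases j <;> simp [Finsupp.single_apply] <;> omega⟩
  by_cases h2 : d 2 = 1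
  · exact ⟨2, by ext j; fin_cases j <;> simp [Finsupp.single_apply] <;> omega⟩
  exact ⟨3, by ext j; fin_cases j <;> simp [Finsupp.single_apply] <;> omega⟩

/-! ### Dimension of the degree 2 homogeneous component -/

noncomputable def e2 : ↑{d : Fin 4 →₀ ℕ | d.degree = 2} ≃
    {f : Fin 4 → Fin 3 // (f 0 : ℕ) + f 1 + f 2 + f 3 = 2} where
  toFun d := ⟨fun i => ⟨d.1 i, by
      have h1 := Finsupp.le_degree i d.1
      have h2 : (d.1).degree = 2 := d.2
      omega⟩, by
    have := deg_univ d.1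
    have h2 : (d.1).degree = 2 := d.2
    rw [h2, Fin.sum_univ_four] at this
    simpa using this.symm⟩
  invFun f := ⟨Finsupp.equivFunOnFinite.symm (fun i => (f.1 i : ℕ)), by
    show Finsupp.degree _ = 2
    rw [deg_univ, Fin.sum_univ_four]
    simpa using f.2⟩
  left_inv d := by ext i; simp
  right_inv f := by ext i; simp

lemma card10 : Fintype.card {f : Fin 4 → Fin 3 // (f 0 : ℕ) + f 1 + f 2 + f 3 = 2} = 10 := by
  decide

noncomputable instance instF : Fintype ↑{d : Fin 4 →₀ ℕ | d.degree = 2} :=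
  Fintype.ofEquiv _ e2.symm

lemma cardd : Fintype.card ↑{d : Fin 4 →₀ ℕ | d.degree = 2} = 10 := by
  rw [Fintype.card_congr e2, card10]

lemma finrank_H2 : Module.finrank ℝ (homogeneousSubmodule (Fin 4) ℝ 2) = 10 := by
  rw [homogeneousSubmodule_eq_finsupp_supported]
  have b : Module.Basis {d : Fin 4 →₀ ℕ | d.degree = 2} ℝ
      (AddMonoidAlgebra.supported ℝ ℝ {d : Fin 4 →₀ ℕ | d.degree = 2}) :=
    MvPolynomial.basisRestrictSupport ℝ _
  exact (Module.finrank_eq_card_basis b).trans cardd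

instance : FiniteDimensional ℝ (homogeneousSubmodule (Fin 4) ℝ 2) := by
  rw [homogeneousSubmodule_eq_finsupp_supported]
  exact Module.Finite.of_basis (MvPolynomial.basisRestrictSupport ℝ _)

/-! ### Linear forms -/

noncomputable def lin (c : Fin 4 → ℝ) : MvPolynomial (Fin 4) ℝ :=
  ∑ i : Fin 4, C (c i) * X i

lemma lin_hom (c : Fin 4 → ℝ) : lin c ∈ homogeneousSubmodule (Fin 4) ℝ 1 := by
  apply Submodule.sum_mem
  intro i _
  rw [mem_homogeneousSubmodule]
  simpa using (isHomogeneous_C (Fin 4) (c i)).mul (isHomogeneous_X ℝ i)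

lemma lin_zero : lin 0 = 0 := by simp [lin]

lemma lin_neg (c : Fin 4 → ℝ) : lin (-c) = -lin c := by
  simp [lin, Finset.sum_neg_distrib]

lemma hc2_mul_X (q : MvPolynomial (Fin 4) ℝ) (i : Fin 4) :
    homogeneousComponent 2 (q * X i) = homogeneousComponent 1 q * X i := by
  have hX : (X i : MvPolynomial (Fin 4) ℝ) = monomial (Finsupp.single i 1) 1 := by
    simp [X]
  ext d
  rw [coeff_homogeneousComponent, hX, coeff_mul_monomial', coeff_mul_monomial',
    coeff_homogeneousComponent]
  by_cases hle : Finsupp.single i 1 ≤ d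
  · have hd : d.degree = (d - Finsupp.single i 1).degree + 1 := by
      have : d - Finsupp.single i 1 + Finsupp.single i 1 = d := tsub_add_cancel_of_le hle
      conv_lhs => rw [← this]
      rw [deg_add, deg_single]
    simp only [hle, if_true]
    split_ifs <;> simp_all
  · simp [hle]

lemma hc2_mul_lin (q : MvPolynomial (Fin 4) ℝ) (c : Fin 4 → ℝ) :
    homogeneousComponent 2 (q * lin c) = homogeneousComponent 1 q * lin c := by
  rw [lin, Finset.mul_sum, map_sum, Finset.mul_sum]
  congr 1
  ext i
  rw [show q * (C (c i) * X i) = C (c i) * (q * X i) by ring, homogeneousComponent_C_mul,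
    hc2_mul_X]
  ring_nf

lemma hc2_mul_cubic (q : MvPolynomial (Fin 4) ℝ) (i j k : Fin 4) :
    homogeneousComponent 2 (q * (X i * X j * X k)) = 0 := by
  have hX : (X i * X j * X k : MvPolynomial (Fin 4) ℝ) =
      monomial (Finsupp.single i 1 + Finsupp.single j 1 + Finsupp.single k 1) 1 := by
    rw [X, X, X, monomial_mul, monomial_mul]
    norm_num
  ext d
  rw [coeff_homogeneousComponent, hX, coeff_mul_monomial']
  simp only [coeff_zero]
  split_ifs with h1 h2
  · exfalso
    have h3 := tsub_add_cancel_of_le h2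
    have h4 : d.degree =
        (d - (Finsupp.single i 1 + Finsupp.single j 1 + Finsupp.single k 1)).degree + 3 := by
      conv_lhs => rw [← h3]
      rw [deg_add, deg_add, deg_add, deg_single, deg_single, deg_single]
    omega
  · rfl
  · rfl

lemma hom1_eq_lin (p : MvPolynomial (Fin 4) ℝ) (hp : p ∈ homogeneousSubmodule (Fin 4) ℝ 1) :
    p = lin (fun i => coeff (Finsupp.single i 1) p) := by
  have hph : p.IsHomogeneous 1 := (mem_homogeneousSubmodule _ _).mp hp
  have hrw : lin (fun i => coeff (Finsupp.single i 1) p) =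
      ∑ i : Fin 4, monomial (Finsupp.single i 1) (coeff (Finsupp.single i 1) p) := by
    rw [lin]
    exact Finset.sum_congr rfl fun i _ => C_mul_X_eq_monomial
  ext d
  rw [hrw, coeff_sum]
  by_cases hd : d.degree = 1
  · obtain ⟨i, rfl⟩ := deg_one_single d hd
    rw [Finset.sum_eq_single i]
    · simp [coeff_monomial]
    · intro j _ hj
      rw [coeff_monomial, if_neg]
      intro hcon
      exact hj ((Finsupp.single_left_inj one_ne_zero).mp hcon)
    · simp
  · rw [hph.coeff_eq_zero hd, Finset.sum_eq_zero]
    intro j _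
    rw [coeff_monomial, if_neg]
    intro hcon
    exact hd (by rw [← hcon, deg_single])

/-! ### Dot products and duality -/

def dot (c x : Fin 4 → ℝ) : ℝ := ∑ i, c i * x i

lemma eval_lin (c x : Fin 4 → ℝ) : eval x (lin c) = dot c x := by
  simp [lin, dot]

lemma dot_add_right (c x y : Fin 4 → ℝ) : dot c (x + y) = dot c x + dot c y := by
  simp [dot, mul_add, Finset.sum_add_distrib]

lemma dot_single (c : Fin 4 → ℝ) (j : Fin 4) : dot c (Pi.single j 1) = c j := by
  rw [dot, Finset.sum_eq_single j] <;> simp_all [Pi.single_apply]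

lemma dot_comb (c1 c2 : ℝ) (u w x : Fin 4 → ℝ) :
    ∑ i, (c1 * u i + c2 * w i) * x i = c1 * dot u x + c2 * dot w x := by
  simp [dot, Finset.mul_sum, add_mul, Finset.sum_add_distrib, mul_assoc]

lemma dot_dual (φ : (Fin 4 → ℝ) →ₗ[ℝ] ℝ) (c : Fin 4 → ℝ) :
    dot c (fun i => φ (Pi.single i 1)) = φ c := by
  have : c = ∑ i, c i • (Pi.single i (1 : ℝ) : Fin 4 → ℝ) := by
    conv_lhs => rw [← Finset.univ_sum_single c]
    exact Finset.sum_congr rfl fun i _ => by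
      ext j; simp [Pi.single_apply]
  conv_rhs => rw [this]
  rw [map_sum, dot]
  exact Finset.sum_congr rfl fun i _ => by rw [map_smul]; simp

lemma exists_dual (u w : Fin 4 → ℝ) (hind : LinearIndependent ℝ ![u, w]) :
    ∃ x₀ x₁ : Fin 4 → ℝ, dot u x₀ = 1 ∧ dot w x₀ = 0 ∧ dot u x₁ = 0 ∧ dot w x₁ = 1 := by
  set T : (Fin 2 → ℝ) →ₗ[ℝ] (Fin 4 → ℝ) :=
    (LinearMap.proj 0).smulRight u + (LinearMap.proj 1).smulRight w with hT
  have hker : LinearMap.ker T = ⊥ := by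
    rw [LinearMap.ker_eq_bot']
    intro c hc
    have hc' : c 0 • u + c 1 • w = 0 := hc
    obtain ⟨h0, h1⟩ := LinearIndependent.pair_iff.mp hind (c 0) (c 1) hc'
    funext j
    fin_cases j <;> assumption
  obtain ⟨L, hL⟩ := T.exists_leftInverse_of_injective hker
  have hLT : ∀ c : Fin 2 → ℝ, L (T c) = c := fun c => by simpa using LinearMap.congr_fun hL c
  have hu : T ![1, 0] = u := by
    show (1 : ℝ) • u + (0 : ℝ) • w = u
    simp
  have hw : T ![0, 1] = w := by
    show (0 : ℝ) • u + (1 : ℝ) • w = w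
    simp
  refine ⟨fun i => ((LinearMap.proj 0).comp L) (Pi.single i 1),
          fun i => ((LinearMap.proj 1).comp L) (Pi.single i 1), ?_, ?_, ?_, ?_⟩ <;>
    rw [dot_dual] <;> simp [← hu, ← hw, hLT]

lemma ker_lemma (u w a b : Fin 4 → ℝ) (hind : LinearIndependent ℝ ![u, w])
    (h : lin u * lin a + lin w * lin b = 0) :
    ∃ t : ℝ, a = t • w ∧ b = -t • u := by
  have hE : ∀ z : Fin 4 → ℝ, dot u z * dot a z + dot w z * dot b z = 0 := by
    intro z
    have := congrArg (eval z) h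
    simpa [eval_lin] using this
  have hB : ∀ x y : Fin 4 → ℝ,
      dot u x * dot a y + dot u y * dot a x + dot w x * dot b y + dot w y * dot b x = 0 := by
    intro x y
    have h1 := hE (x + y)
    rw [dot_add_right, dot_add_right, dot_add_right, dot_add_right] at h1
    linear_combination h1 - hE x - hE y
  have hP : ∀ (x : Fin 4 → ℝ) (j : Fin 4),
      dot u x * a j + u j * dot a x + dot w x * b j + w j * dot b x = 0 := by
    intro x j
    have := hB x (Pi.single j 1)
    simpa [dot_single] using this
  obtain ⟨x₀, x₁, h00, h01, h10, h11⟩ := exists_dual u w hind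
  set α := dot a x₀; set β := dot b x₀; set γ := dot a x₁; set δ := dot b x₁
  have E0 : ∀ j, a j = -α * u j + -β * w j := by
    intro j; have := hP x₀ j; rw [h00, h01] at this; linarith
  have E1 : ∀ j, b j = -γ * u j + -δ * w j := by
    intro j; have := hP x₁ j; rw [h10, h11] at this; linarith
  have hα : α = 0 := by
    have : α = ∑ i, a i * x₀ i := rfl
    rw [Finset.sum_congr rfl (fun i _ => by rw [E0 i])] at this
    rw [dot_comb, h00, h01] at this
    linarith
  have hδ : δ = 0 := by
    have : δ = ∑ i, b i * x₁ i := rfl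
    rw [Finset.sum_congr rfl (fun i _ => by rw [E1 i])] at this
    rw [dot_comb, h10, h11] at this
    linarith
  have hγ : γ = -β := by
    have : γ = ∑ i, a i * x₁ i := rfl
    rw [Finset.sum_congr rfl (fun i _ => by rw [E0 i])] at this
    rw [dot_comb, h10, h11, hα] at this
    linarith
  refine ⟨-β, ?_, ?_⟩
  · funext j; have := E0 j; rw [hα] at this; simpa using this
  · funext j; have := E1 j; rw [hδ, hγ] at this; simpa using this

/-! ### General position gives independence of the two coordinate forms -/

lemma indep_uw (v : Fin 4 → Fin 3 → ℝ)
    (hplane : ∀ i, v i 2 = 0)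
    (hgen : ∀ i j k : Fin 4, i ≠ j → i ≠ k → j ≠ k →
      AffineIndependent ℝ ![v i, v j, v k]) :
    LinearIndependent ℝ ![fun i => v i 0, fun i => v i 1] := by
  rw [LinearIndependent.pair_iff]
  intro s t hst
  by_contra hc
  push_neg at hc
  have hst' : ∀ i, s * v i 0 + t * v i 1 = 0 := by
    intro i
    have := congrFun hst i
    simpa using this
  have hs2 : s^2 + t^2 ≠ 0 := by
    intro h
    have hs : s = 0 := by nlinarith
    have ht : t = 0 := by nlinarith
    rcases eq_or_ne s 0 with h | h
    · exact hc h ht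
    · exact h hs
  set dvec : Fin 3 → ℝ := ![t, -s, 0] with hdvec
  have hv : ∀ i, v i = ((t * v i 0 - s * v i 1) / (s^2 + t^2)) • dvec := by
    intro i
    funext j
    fin_cases j
    · show v i 0 = (t * v i 0 - s * v i 1) / (s^2 + t^2) * t
      rw [div_mul_eq_mul_div, eq_comm, div_eq_iff hs2]
      linear_combination (-s) * hst' i
    · show v i 1 = (t * v i 0 - s * v i 1) / (s^2 + t^2) * (-s)
      rw [div_mul_eq_mul_div, eq_comm, div_eq_iff hs2]
      linear_combination (-t) * hst' i
    · show v i 2 = _ * 0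
      simp [hplane i]
  obtain ⟨τ, hτ⟩ : ∃ τ : Fin 4 → ℝ, ∀ i, v i = τ i • dvec :=
    ⟨fun i => (t * v i 0 - s * v i 1) / (s^2 + t^2), hv⟩
  have hcol : Collinear ℝ ({v 0, v 1, v 2} : Set (Fin 3 → ℝ)) := by
    rw [collinear_iff_of_mem (Set.mem_insert (v 0) _)]
    refine ⟨dvec, ?_⟩
    intro p hp
    have key : ∀ i : Fin 4, ∃ r : ℝ, v i = r • dvec +ᵥ v 0 := by
      intro i
      refine ⟨τ i - τ 0, ?_⟩
      rw [hτ i, vadd_eq_add, sub_smul, hτ 0]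
      abel
    rcases hp with rfl | rfl | rfl
    · exact key 0
    · exact key 1
    · exact key 2
  exact (affineIndependent_iff_not_collinear_set.mp
    (hgen 0 1 2 (by decide) (by decide) (by decide))) hcol

/-! ### The map Φ -/

noncomputable def linM : (Fin 4 → ℝ) →ₗ[ℝ] MvPolynomial (Fin 4) ℝ :=
  ∑ i : Fin 4, (LinearMap.proj i).smulRight (X i)

lemma linM_apply (c : Fin 4 → ℝ) : linM c = lin c := by
  simp [linM, lin, smul_eq_C_mul]

noncomputable def Phi (u w : Fin 4 → ℝ) :
    ((Fin 4 → ℝ) × (Fin 4 → ℝ)) →ₗ[ℝ] MvPolynomial (Fin 4) ℝ :=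
  (LinearMap.mulLeft ℝ (lin u)).comp (linM.comp (LinearMap.fst ℝ _ _)) +
  (LinearMap.mulLeft ℝ (lin w)).comp (linM.comp (LinearMap.snd ℝ _ _))

lemma Phi_apply (u w a b : Fin 4 → ℝ) :
    Phi u w (a, b) = lin u * lin a + lin w * lin b := by
  simp [Phi, linM_apply, LinearMap.mulLeft_apply]

/-! ### Main theorem -/

set_option maxHeartbeats 1000000 in
set_option synthInstance.maxHeartbeats 400000 in
theorem stmt_9 (v : Fin 4 → Fin 3 → ℝ)
    (hplane : ∀ i, v i 2 = 0)
    (hgen : ∀ i j k : Fin 4, i ≠ j → i ≠ k → j ≠ k →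
      AffineIndependent ℝ ![v i, v j, v k])
    (I : Ideal (MvPolynomial (Fin 4) ℝ))
    (hI : I = Ideal.span
      ({p | ∃ i j k : Fin 4, i ≠ j ∧ i ≠ k ∧ j ≠ k ∧ p = X i * X j * X k} ∪
       {p | ∃ j : Fin 3, p = ∑ i : Fin 4, C (v i j) * X i})) :
    Module.finrank ℝ
      (Submodule.map (Ideal.Quotient.mkₐ ℝ I).toLinearMap
        (homogeneousSubmodule (Fin 4) ℝ 2)) = 3 := by
  classical
  set u : Fin 4 → ℝ := fun i => v i 0 with hu
  set w : Fin 4 → ℝ := fun i => v i 1 with hw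
  have hind : LinearIndependent ℝ ![u, w] := indep_uw v hplane hgen
  set H2 := homogeneousSubmodule (Fin 4) ℝ 2 with hH2
  set K := LinearMap.range (Phi u w) with hK
  -- K equals I ∩ H2
  have hKeq : K = Submodule.restrictScalars ℝ I ⊓ H2 := by
    apply le_antisymm
    · rintro p ⟨⟨a, b⟩, rfl⟩
      rw [Phi_apply, Submodule.mem_inf]
      constructor
      · show lin u * lin a + lin w * lin b ∈ I
        rw [hI]
        have h0 : lin u ∈ Ideal.span
            ({p | ∃ i j k : Fin 4, i ≠ j ∧ i ≠ k ∧ j ≠ k ∧ p = X i * X j * X k} ∪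
             {p | ∃ j : Fin 3, p = ∑ i : Fin 4, C (v i j) * X i}) :=
          Ideal.subset_span (Or.inr ⟨0, rfl⟩)
        have h1 : lin w ∈ Ideal.span
            ({p | ∃ i j k : Fin 4, i ≠ j ∧ i ≠ k ∧ j ≠ k ∧ p = X i * X j * X k} ∪
             {p | ∃ j : Fin 3, p = ∑ i : Fin 4, C (v i j) * X i}) :=
          Ideal.subset_span (Or.inr ⟨1, rfl⟩)
        exact Ideal.add_mem _ (Ideal.mul_mem_right _ _ h0) (Ideal.mul_mem_right _ _ h1)
      · apply Submodule.add_mem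
        · rw [hH2, mem_homogeneousSubmodule]
          have := ((mem_homogeneousSubmodule _ _).mp (lin_hom u)).mul
            ((mem_homogeneousSubmodule _ _).mp (lin_hom a))
          simpa using this
        · rw [hH2, mem_homogeneousSubmodule]
          have := ((mem_homogeneousSubmodule _ _).mp (lin_hom w)).mul
            ((mem_homogeneousSubmodule _ _).mp (lin_hom b))
          simpa using this
    · rintro p hp
      rw [Submodule.mem_inf] at hp
      obtain ⟨hpI, hpH⟩ := hp
      have hpI' : p ∈ Submodule.span (MvPolynomial (Fin 4) ℝ)
          ({p | ∃ i j k : Fin 4, i ≠ j ∧ i ≠ k ∧ j ≠ k ∧ p = X i * X j * X k} ∪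
           {p | ∃ j : Fin 3, p = ∑ i : Fin 4, C (v i j) * X i}) := by
        have hmem : p ∈ I := hpI
        rw [hI] at hmem
        exact hmem
      obtain ⟨c, hsupp, hsum⟩ := Submodule.mem_span_set.mp hpI'
      have hp2 : homogeneousComponent 2 p = p := by
        rw [homogeneousComponent_of_mem hpH]; simp
      rw [← hp2, ← hsum, Finsupp.sum, map_sum]
      apply Submodule.sum_mem
      intro g hg
      have hgmem := hsupp hg
      rw [smul_eq_mul]
      rcases hgmem with ⟨i, j, k, hij, hik, hjk, rfl⟩ | ⟨j, rfl⟩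
      · rw [hc2_mul_cubic]
        exact zero_mem _
      · have hgl : (∑ i : Fin 4, C (v i j) * X i) = lin (fun i => v i j) := rfl
        rw [hgl, hc2_mul_lin]
        obtain ⟨a, ha⟩ : ∃ a, homogeneousComponent 1 (c (lin fun i => v i j)) = lin a :=
          ⟨_, hom1_eq_lin _ (homogeneousComponent_mem 1 _)⟩
        rw [ha]
        fin_cases j
        · show lin a * lin u ∈ K
          exact ⟨(a, 0), by rw [Phi_apply, lin_zero, mul_zero, add_zero, mul_comm]⟩
        · show lin a * lin w ∈ K
          exact ⟨(0, a), by rw [Phi_apply, lin_zero, mul_zero, zero_add, mul_comm]⟩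
        · show lin a * lin (fun i => v i 2) ∈ K
          have hz : (fun i => v i (2 : Fin 3)) = (0 : Fin 4 → ℝ) := funext fun i => hplane i
          rw [hz, lin_zero, mul_zero]
          exact zero_mem _
  -- kernel of Phi
  have hker : LinearMap.ker (Phi u w) =
      Submodule.span ℝ {((w, -u) : (Fin 4 → ℝ) × (Fin 4 → ℝ))} := by
    apply le_antisymm
    · rintro ⟨a, b⟩ hab
      rw [LinearMap.mem_ker, Phi_apply] at hab
      obtain ⟨t, hta, htb⟩ := ker_lemma u w a b hind hab
      apply Submodule.mem_span_singleton.mpr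
      refine ⟨t, ?_⟩
      rw [Prod.smul_mk]
      rw [hta, htb]
      simp
    · rw [Submodule.span_le, Set.singleton_subset_iff, SetLike.mem_coe, LinearMap.mem_ker,
        Phi_apply, lin_neg]
      ring
  have hwne : ((w, -u) : (Fin 4 → ℝ) × (Fin 4 → ℝ)) ≠ 0 := by
    intro h
    have hw0 : w = 0 := congrArg Prod.fst h
    exact hind.ne_zero 1 (by simpa using hw0)
  have hkerrank : Module.finrank ℝ (LinearMap.ker (Phi u w)) = 1 := by
    rw [hker]
    exact finrank_span_singleton hwne
  have hdom : Module.finrank ℝ ((Fin 4 → ℝ) × (Fin 4 → ℝ)) = 8 := by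
    simp
  have hKrank : Module.finrank ℝ K = 7 := by
    have h := LinearMap.finrank_range_add_finrank_ker (Phi u w)
    rw [hkerrank, hdom, ← hK] at h
    omega
  -- rank-nullity for the quotient map restricted to H2
  set f := (Ideal.Quotient.mkₐ ℝ I).toLinearMap with hf
  have hKle : K ≤ H2 := hKeq ▸ inf_le_right
  have hkerf : LinearMap.ker (f.domRestrict H2) = Submodule.comap H2.subtype K := by
    ext x
    rw [LinearMap.mem_ker, LinearMap.domRestrict_apply, Submodule.mem_comap, hKeq,
      Submodule.mem_inf]
    constructor
    · intro hx
      refine ⟨?_, x.2⟩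
      show (x : MvPolynomial (Fin 4) ℝ) ∈ I
      rw [← Ideal.Quotient.eq_zero_iff_mem]
      exact hx
    · rintro ⟨hx, -⟩
      show f (x : MvPolynomial (Fin 4) ℝ) = 0
      exact Ideal.Quotient.eq_zero_iff_mem.mpr hx
  have hrn := LinearMap.finrank_range_add_finrank_ker (f.domRestrict H2)
  rw [LinearMap.range_domRestrict, hkerf, finrank_H2] at hrn
  have hcomap : Module.finrank ℝ (Submodule.comap H2.subtype K) = 7 := by
    rw [(Submodule.comapSubtypeEquivOfLe hKle).finrank_eq, hKrank]
  rw [hcomap] at hrn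
  omega
end

section
/- Let Σ' be the stellar subdivision of the tetrahedron boundary at all four facets, realized in ℝ³ with the original vertices 1,2,3,4 in general position in the plane z = 0 and the new vertices 1',2',3',4' off that plane (each new vertex in the affine span condition for properness). If the Artinian reduction A*(Σ') (with respect to the linear system of parameters given by the coordinates) satisfied the Lefschetz property in degree 1 for some ℓ ∈ A¹(Σ'), i.e., ·ℓ : A¹(Σ') → A²(Σ') is an isomorphism, then the induced multiplication ·ℓ : A¹(Δ) → A²(Δ) on the quotient A*(Δ), Δ = K₄ realized in the plane, would be surjective; since dim A¹(Δ) = 2 and dim A²(Δ) = 3, this is a contradiction. Hence A*(Σ') has no Lefschetz element in degree 1. -/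
open MvPolynomial

/-- Facets of the stellar subdivision Σ' of the tetrahedron boundary at all four
triangles.  Vertices 0,1,2,3 are the original vertices, 4,5,6,7 the new ones. -/
def spFacets : Finset (Finset (Fin 8)) :=
  {{1,2,4},{1,3,4},{2,3,4},{0,2,5},{0,3,5},{2,3,5},
   {0,1,6},{0,3,6},{1,3,6},{0,1,7},{0,2,7},{1,2,7}}

/-- The simplicial complex Σ'. -/
def spComplex : Finset (Finset (Fin 8)) :=
  Finset.univ.filter (fun s => s ≠ ∅ ∧ ∃ f ∈ spFacets, s ⊆ f)

/-!
Dually to the count dim A¹(Δ) = 2 < 3 = dim A²(Δ): the vertices of Δ span only a plane, so a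
vector `z` supported on them is subject to just three linear conditions, orthogonality to the two
planar coordinates and to the linear form `ℓ`; hence such a `z ≠ 0` exists. The ring map
`p ↦ p(t • z) mod t³` kills the linear system of parameters and every non-face monomial (one
containing a new vertex vanishes at `z`; one inside Δ is a triangle of K₄, of degree ≥ 3), so it
factors through A*(Σ'). It kills `ℓ` but not `X i ^ 2` when `z i ≠ 0`, so `X i ^ 2 ∉ ℓ · A¹`.
-/

section RestrictLine

variable {σ R : Type*} [CommRing R]

noncomputable def restrictLine (z : σ → R) : MvPolynomial σ R →ₐ[R] Polynomial R :=
  aeval fun i => Polynomial.C (z i) * Polynomial.X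

theorem restrictLine_prod_X (z : σ → R) (s : Finset σ) :
    restrictLine z (∏ i ∈ s, X i) = Polynomial.C (∏ i ∈ s, z i) * Polynomial.X ^ s.card := by
  simp [restrictLine, Finset.prod_mul_distrib]

theorem restrictLine_X_pow (z : σ → R) (i : σ) (n : ℕ) :
    restrictLine z (X i ^ n) = Polynomial.C (z i ^ n) * Polynomial.X ^ n := by
  simp [restrictLine, mul_pow]

theorem restrictLine_sum_C_mul_X [Fintype σ] (z c : σ → R) :
    restrictLine z (∑ i, C (c i) * X i) = Polynomial.C (c ⬝ᵥ z) * Polynomial.X := by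
  simp [restrictLine, dotProduct, Finset.sum_mul, mul_assoc]

theorem X_pow_dvd_restrictLine_prod_X {z : σ → R} {s : Finset σ} {n : ℕ}
    (h : n ≤ s.card ∨ ∃ i ∈ s, z i = 0) : Polynomial.X ^ n ∣ restrictLine z (∏ i ∈ s, X i) := by
  rw [restrictLine_prod_X]
  rcases h with hn | ⟨i, hi, hzi⟩
  · exact (pow_dvd_pow _ hn).mul_left _
  · simp [Finset.prod_eq_zero hi hzi]

theorem mk_mul_ne_mk_X_pow [NoZeroDivisors R] {I : Ideal (MvPolynomial σ R)} {z : σ → R} {n : ℕ}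
    (hI : I ≤ (Ideal.span {Polynomial.X ^ (n + 1)}).comap (restrictLine z))
    {l : MvPolynomial σ R} (hl : restrictLine z l = 0) {i : σ} (hi : z i ≠ 0)
    (p : MvPolynomial σ R) :
    Ideal.Quotient.mk I (l * p) ≠ Ideal.Quotient.mk I (X i ^ n) := by
  rw [Ne, Ideal.Quotient.eq]
  intro hmem
  have hdvd := Ideal.mem_span_singleton.mp (hI hmem)
  rw [map_sub, map_mul, hl, zero_mul, zero_sub, dvd_neg, restrictLine_X_pow,
    Polynomial.X_pow_dvd_iff] at hdvd
  have hcoeff := hdvd n n.lt_succ_self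
  rw [Polynomial.coeff_C_mul_X_pow, if_pos rfl] at hcoeff
  exact pow_ne_zero n hi hcoeff

end RestrictLine

open Module in
theorem exists_ne_zero_supported_dotProduct_eq_zero {σ ι K : Type*} [Field K] [Fintype σ]
    [Fintype ι] (S : Finset σ) (c : ι → σ → K) (h : Fintype.card ι < S.card) :
    ∃ z : σ → K, z ≠ 0 ∧ (∀ i ∉ S, z i = 0) ∧ ∀ j, c j ⬝ᵥ z = 0 := by
  classical
  let F : (σ → K) →ₗ[K] (ι → K) × ((Sᶜ : Finset σ) → K) :=
    (Matrix.of c).mulVecLin.prod (LinearMap.funLeft K K Subtype.val)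
  have hF : finrank K ((ι → K) × ((Sᶜ : Finset σ) → K)) < finrank K (σ → K) := by
    simp only [finrank_prod, finrank_fintype_fun_eq_card, Fintype.card_coe, Finset.card_compl]
    have := S.card_le_univ
    omega
  obtain ⟨z, hz, hz0⟩ : ∃ z ∈ LinearMap.ker F, z ≠ 0 :=
    Submodule.exists_mem_ne_zero_of_ne_bot (LinearMap.ker_ne_bot_of_finrank_lt hF)
  rw [LinearMap.mem_ker, Prod.ext_iff] at hz
  exact ⟨z, hz0, fun i hi => congrFun hz.2 ⟨i, Finset.mem_compl.mpr hi⟩, congrFun hz.1⟩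

theorem mem_spComplex_of_subset_of_card_le_two :
    ∀ s : Finset (Fin 8), s ⊆ {0, 1, 2, 3} → s ≠ ∅ → s.card ≤ 2 → s ∈ spComplex := by
  decide

theorem exists_ne_zero_supported_base_orthogonal (v : Fin 8 → Fin 3 → ℝ)
    (hplane : ∀ i : Fin 8, i.val < 4 → v i 2 = 0) (c : Fin 8 → ℝ) :
    ∃ z : Fin 8 → ℝ, z ≠ 0 ∧ (∀ i ∉ ({0, 1, 2, 3} : Finset (Fin 8)), z i = 0) ∧
      (∀ j, (fun i => v i j) ⬝ᵥ z = 0) ∧ c ⬝ᵥ z = 0 := by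
  obtain ⟨z, hz0, hzS, hz⟩ := exists_ne_zero_supported_dotProduct_eq_zero {0, 1, 2, 3}
    ![fun i => v i 0, fun i => v i 1, c] (by decide)
  refine ⟨z, hz0, hzS, fun j => ?_, hz 2⟩
  fin_cases j
  · exact hz 0
  · exact hz 1
  · refine Finset.sum_eq_zero fun i _ => ?_
    by_cases hi : i ∈ ({0, 1, 2, 3} : Finset (Fin 8))
    · simp [hplane i (by revert i; decide)]
    · simp [hzS i hi]

theorem span_le_comap_restrictLine (v : Fin 8 → Fin 3 → ℝ) {z : Fin 8 → ℝ}
    (hzS : ∀ i ∉ ({0, 1, 2, 3} : Finset (Fin 8)), z i = 0)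
    (hzv : ∀ j, (fun i => v i j) ⬝ᵥ z = 0) :
    Ideal.span ({p | ∃ s : Finset (Fin 8), s ∉ spComplex ∧ s ≠ ∅ ∧ p = ∏ i ∈ s, X i} ∪
       {p | ∃ j : Fin 3, p = ∑ i : Fin 8, C (v i j) * X i}) ≤
      (Ideal.span {Polynomial.X ^ 3}).comap (restrictLine z) := by
  rw [Ideal.span_le]
  rintro _ (⟨s, hs, hs0, rfl⟩ | ⟨j, rfl⟩) <;>
    simp only [SetLike.mem_coe, Ideal.mem_comap, Ideal.mem_span_singleton]
  · apply X_pow_dvd_restrictLine_prod_X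
    by_cases hsub : s ⊆ {0, 1, 2, 3}
    · left
      by_contra! h
      exact hs (mem_spComplex_of_subset_of_card_le_two s hsub hs0 (by omega))
    · right
      obtain ⟨i, his, hi⟩ := Finset.not_subset.mp hsub
      exact ⟨i, his, hzS i hi⟩
  · rw [restrictLine_sum_C_mul_X, hzv j, map_zero, zero_mul]
    exact dvd_zero _

theorem stmt_12_general (v : Fin 8 → Fin 3 → ℝ)
    (hplane : ∀ i : Fin 8, i.val < 4 → v i 2 = 0)
    (I : Ideal (MvPolynomial (Fin 8) ℝ))
    (hI : I = Ideal.span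
      ({p | ∃ s : Finset (Fin 8), s ∉ spComplex ∧ s ≠ ∅ ∧ p = ∏ i ∈ s, X i} ∪
       {p | ∃ j : Fin 3, p = ∑ i : Fin 8, C (v i j) * X i}))
    (A : ℕ → Submodule ℝ (MvPolynomial (Fin 8) ℝ ⧸ I))
    (hA : ∀ k, A k = Submodule.map (Ideal.Quotient.mkₐ ℝ I).toLinearMap
      (homogeneousSubmodule (Fin 8) ℝ k)) :
    ¬ ∃ ℓ ∈ A 1,
        (∀ x ∈ A 1, ℓ * x = 0 → x = 0) ∧
        (∀ y ∈ A 2, ∃ x ∈ A 1, ℓ * x = y) := by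
  rintro ⟨ℓ, hℓ, -, hsurj⟩
  rw [hA] at hℓ
  obtain ⟨l, hl, rfl⟩ := hℓ
  rw [SetLike.mem_coe, homogeneousSubmodule_one_eq_span_X,
    Submodule.mem_span_range_iff_exists_fun] at hl
  obtain ⟨c, rfl⟩ := hl
  obtain ⟨z, hz0, hzS, hzv, hzc⟩ := exists_ne_zero_supported_base_orthogonal v hplane c
  obtain ⟨i, hi⟩ : ∃ i, z i ≠ 0 := Function.ne_iff.mp hz0
  obtain ⟨x, hx, hxy⟩ := hsurj (Ideal.Quotient.mkₐ ℝ I (X i ^ 2))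
    (hA 2 ▸ ⟨_, isHomogeneous_X_pow i 2, rfl⟩)
  rw [hA] at hx
  obtain ⟨p, -, rfl⟩ := hx
  simp only [AlgHom.toLinearMap_apply, Ideal.Quotient.mkₐ_eq_mk, ← map_mul] at hxy
  refine mk_mul_ne_mk_X_pow (hI ▸ span_le_comap_restrictLine v hzS hzv) ?_ hi p hxy
  simp_rw [smul_eq_C_mul]
  rw [restrictLine_sum_C_mul_X, hzc, map_zero, zero_mul]

/-- The Artinian reduction of the face ring of Σ', realized with the original
vertices in general position in the plane `z = 0` and the new vertices off that
plane, has no Lefschetz element in degree 1. -/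
theorem stmt_12 (v : Fin 8 → Fin 3 → ℝ)
    (hplane : ∀ i : Fin 8, i.val < 4 → v i 2 = 0)
    (hgen : ∀ i j k : Fin 8, i.val < 4 → j.val < 4 → k.val < 4 →
      i ≠ j → i ≠ k → j ≠ k → AffineIndependent ℝ ![v i, v j, v k])
    (hoff : ∀ i : Fin 8, 4 ≤ i.val → v i 2 ≠ 0)
    (I : Ideal (MvPolynomial (Fin 8) ℝ))
    (hI : I = Ideal.span
      ({p | ∃ s : Finset (Fin 8), s ∉ spComplex ∧ s ≠ ∅ ∧ p = ∏ i ∈ s, X i} ∪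
       {p | ∃ j : Fin 3, p = ∑ i : Fin 8, C (v i j) * X i}))
    (A : ℕ → Submodule ℝ (MvPolynomial (Fin 8) ℝ ⧸ I))
    (hA : ∀ k, A k = Submodule.map (Ideal.Quotient.mkₐ ℝ I).toLinearMap
      (homogeneousSubmodule (Fin 8) ℝ k)) :
    ¬ ∃ ℓ ∈ A 1,
        (∀ x ∈ A 1, ℓ * x = 0 → x = 0) ∧
        (∀ y ∈ A 2, ∃ x ∈ A 1, ℓ * x = y) :=
  stmt_12_general v hplane I hI A hA
end
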